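/- arXiv:1507.07502 — 3 statements merged into one kernel-verified Lean document; each statement's English description precedes it below -/
import Mathlib

section
/- Suppose F is a Borel probability measure on [0,∞) satisfying tail assumption (T1) with index α ∈ (0,1). Then condition (★) is equivalent to condition (N): lim_{η→0⁺} limsup_{x→∞} (x/A(x)) · E[ (A(x−X)²/(x−X)) · 1_{1 ≤ x−X < ηx} ] = 0, where X is a random variable with law F. -/
open MeasureTheory ProbabilityTheory Filter Set Asymptotics Topology

/-- `t > 0` is an arithmetic support span of `F` (i.e. `F` is supported on `t·ℤ`). -/
def IsArithSpan (F : MeasureTheory.Measure ℝ) (t : ℝ) : Prop :=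
  0 < t ∧ F ({x : ℝ | ∃ k : ℤ, x = t * k}ᶜ) = 0

/-- The ratio `r(x) = x · F((x−h, x]) / F((x, ∞))`. -/
noncomputable def rr (F : MeasureTheory.Measure ℝ) (h x : ℝ) : ℝ :=
  x * (F (Set.Ioc (x - h) x)).toReal / (F (Set.Ioi x)).toReal

/-- Condition (★): `lim_{η→0⁺} limsup_{x→∞} (1/A(x)²) ∫_1^{ηx} (A(s)²/s)·r(x−s) ds = 0`. -/
def CondStar (F : MeasureTheory.Measure ℝ) (A : ℝ → ℝ) (h : ℝ) : Prop :=
  Filter.Tendsto (fun η : ℝ =>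
      Filter.limsup (fun x : ℝ =>
        1 / (A x) ^ 2 * ∫ s in (1:ℝ)..(η * x), (A s) ^ 2 / s * rr F h (x - s))
        Filter.atTop)
    (nhdsWithin 0 (Set.Ioi 0)) (nhds 0)

/-- Condition (N):
`lim_{η→0⁺} limsup_{x→∞} (x/A(x)) · E[(A(x−X)²/(x−X)) · 1_{1 ≤ x−X < ηx}] = 0`,
where `X` has law `F`. -/
def CondN (F : MeasureTheory.Measure ℝ) (A : ℝ → ℝ) : Prop :=
  Filter.Tendsto (fun η : ℝ =>
      Filter.limsup (fun x : ℝ =>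
        x / A x * ∫ y, Set.indicator {s : ℝ | 1 ≤ x - s ∧ x - s < η * x}
          (fun s => (A (x - s)) ^ 2 / (x - s)) y ∂F) Filter.atTop)
    (nhdsWithin 0 (Set.Ioi 0)) (nhds 0)


open scoped ENNReal

/-!
Write `T(z) = F((z, ∞))` and `φ(u) = A(u)² / u`. By Tonelli,
`∫_1^b φ(s) r(x - s) ds = E[∫_{(1, b] ∩ (x - X - h, x - X]} φ(s) (x - s) / T(x - s) ds]`,
and the inner interval has length at most `h` and lies within `h` of `u = x - X`. On it `φ(s)`
equals `φ(u)` up to a factor `1 + h`, while `(x - s) / T(x - s)` is of order `x A(x)` as long as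
`s ≤ x / 4`: this uses (T1), the monotonicity of `A`, and regular variation with `α < 1`, which
gives `A(3x/4) > A(x)/2` and `A(2x) < 2 A(x)` for large `x`. Hence, for `η < η' < 1/4` and large
`x`, the (★)-quantity at `(η, x)` is at most a constant times the (N)-quantity at `(η', x)`, and
the (N)-quantity at `(η, x)` is at most a constant times the (★)-quantity at `(η', x + h)`. Such
two-sided comparisons with a slightly larger `η'` carry `lim_{η → 0⁺} limsup_{x → ∞} = 0` over in
both directions.
-/

theorem Real.limsup_nonneg {ι : Type*} {l : Filter ι} [l.NeBot] {u : ι → ℝ}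
    (hu : ∀ᶠ i in l, 0 ≤ u i) : 0 ≤ limsup u l := by
  by_cases hb : IsBoundedUnder (· ≤ ·) l u
  · exact le_limsup_of_frequently_le hu.frequently hb
  · rw [Real.limsup_of_not_isBoundedUnder hb]

theorem isBoundedUnder_of_le_const_mul_comp {u v τ : ℝ → ℝ} {C : ℝ} (hC : 0 ≤ C)
    (hτ : Tendsto τ atTop atTop) (hv : IsBoundedUnder (· ≤ ·) atTop v)
    (huv : ∀ᶠ x in atTop, u x ≤ C * v (τ x)) : IsBoundedUnder (· ≤ ·) atTop u :=
  ((hτ.isBoundedUnder_comp hv).comp fun _ _ h => mul_le_mul_of_nonneg_left h hC).mono_le huv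

theorem limsup_le_const_mul_limsup_of_le {u v τ : ℝ → ℝ} {C : ℝ} (hC : 0 ≤ C)
    (hτ : Tendsto τ atTop atTop) (hu : ∀ᶠ x in atTop, 0 ≤ u x)
    (hv : IsBoundedUnder (· ≤ ·) atTop v) (huv : ∀ᶠ x in atTop, u x ≤ C * v (τ x)) :
    limsup u atTop ≤ C * limsup v atTop := by
  have hlt : ∀ b, limsup v atTop < b → limsup u atTop ≤ C * b := fun b hb =>
    limsup_le_of_le (IsCoboundedUnder.of_frequently_ge hu.frequently)
      ((huv.and (hτ.eventually (eventually_lt_of_limsup_lt hb hv))).mono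
        fun x hx => hx.1.trans (mul_le_mul_of_nonneg_left hx.2.le hC))
  exact ge_of_tendsto (((continuous_const_mul C).tendsto _).mono_left
    (nhdsWithin_le_nhds (s := Ioi (limsup v atTop)))) (eventually_nhdsWithin_of_forall hlt)

theorem tendsto_two_mul_nhdsGT_zero : Tendsto (2 * ·) (𝓝[>] (0 : ℝ)) (𝓝[>] 0) :=
  tendsto_iff_comap.2 (comap_mulLeft_nhdsGT_zero two_pos).ge

section LimsupTransfer

variable {u v : ℝ → ℝ → ℝ} {τ σ : ℝ → ℝ} {δ C D : ℝ}

theorem tendsto_limsup_of_le_const_mul (hδ : 0 < δ) (hC : 0 ≤ C) (hτ : Tendsto τ atTop atTop)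
    (hu : ∀ η ∈ Ioo 0 δ, ∀ᶠ x in atTop, 0 ≤ u η x)
    (hv : ∀ η ∈ Ioo 0 δ, IsBoundedUnder (· ≤ ·) atTop (v η))
    (huv : ∀ η η', 0 < η → η < η' → η' < δ → ∀ᶠ x in atTop, u η x ≤ C * v η' (τ x))
    (hlim : Tendsto (fun η => limsup (v η) atTop) (𝓝[>] 0) (𝓝 0)) :
    Tendsto (fun η => limsup (u η) atTop) (𝓝[>] 0) (𝓝 0) := by
  have hupper : Tendsto (fun η => C * limsup (v (2 * η)) atTop) (𝓝[>] 0) (𝓝 0) := by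
    simpa using (hlim.comp tendsto_two_mul_nhdsGT_zero).const_mul C
  have hsmall : ∀ᶠ η in 𝓝[>] (0 : ℝ), η ∈ Ioo 0 (δ / 2) := Ioo_mem_nhdsGT (half_pos hδ)
  refine tendsto_of_tendsto_of_tendsto_of_le_of_le' tendsto_const_nhds hupper ?_ ?_
  · filter_upwards [hsmall] with η hη
    exact Real.limsup_nonneg (hu η ⟨hη.1, by linarith [hη.2]⟩)
  · filter_upwards [hsmall] with η ⟨hη0, hηδ⟩
    exact limsup_le_const_mul_limsup_of_le hC hτ (hu η ⟨hη0, by linarith⟩)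
      (hv (2 * η) ⟨by linarith, by linarith⟩) (huv η (2 * η) hη0 (by linarith) (by linarith))

theorem tendsto_limsup_iff_of_le_const_mul (hδ : 0 < δ) (hC : 0 ≤ C) (hD : 0 ≤ D)
    (hτ : Tendsto τ atTop atTop) (hσ : Tendsto σ atTop atTop)
    (hu : ∀ η ∈ Ioo 0 δ, ∀ᶠ x in atTop, 0 ≤ u η x)
    (hv : ∀ η ∈ Ioo 0 δ, ∀ᶠ x in atTop, 0 ≤ v η x)
    (huv : ∀ η η', 0 < η → η < η' → η' < δ → ∀ᶠ x in atTop, u η x ≤ C * v η' (τ x))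
    (hvu : ∀ η η', 0 < η → η < η' → η' < δ → ∀ᶠ x in atTop, v η x ≤ D * u η' (σ x)) :
    Tendsto (fun η => limsup (u η) atTop) (𝓝[>] 0) (𝓝 0) ↔
      Tendsto (fun η => limsup (v η) atTop) (𝓝[>] 0) (𝓝 0) := by
  -- A real `limsup` of a function unbounded above is `0`: if every `v η` is unbounded, so is
  -- every `u η`, and both limits hold trivially.
  by_cases hbdd : ∃ η₀ ∈ Ioo 0 δ, IsBoundedUnder (· ≤ ·) atTop (v η₀)
  · obtain ⟨η₀, ⟨hη₀, hη₀δ⟩, hvη₀⟩ := hbdd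
    have hubdd : ∀ η ∈ Ioo 0 η₀, IsBoundedUnder (· ≤ ·) atTop (u η) := fun η hη =>
      isBoundedUnder_of_le_const_mul_comp hC hτ hvη₀ (huv η η₀ hη.1 hη.2 hη₀δ)
    have hvbdd : ∀ η ∈ Ioo 0 η₀, IsBoundedUnder (· ≤ ·) atTop (v η) := fun η hη =>
      isBoundedUnder_of_le_const_mul_comp hD hσ
        (hubdd ((η + η₀) / 2) ⟨by linarith [hη.1], by linarith [hη.2]⟩)
        (hvu η _ hη.1 (by linarith [hη.2]) (by linarith [hη.2]))
    have hsub : ∀ η ∈ Ioo 0 η₀, η ∈ Ioo 0 δ := fun η hη => ⟨hη.1, hη.2.trans hη₀δ⟩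
    exact ⟨tendsto_limsup_of_le_const_mul hη₀ hD hσ (fun η hη => hv η (hsub η hη)) hubdd
        fun η η' h h' h'' => hvu η η' h h' (h''.trans hη₀δ),
      tendsto_limsup_of_le_const_mul hη₀ hC hτ (fun η hη => hu η (hsub η hη)) hvbdd
        fun η η' h h' h'' => huv η η' h h' (h''.trans hη₀δ)⟩
  · push Not at hbdd
    have hunbdd : ∀ η ∈ Ioo 0 δ, ¬ IsBoundedUnder (· ≤ ·) atTop (u η) := fun η hη hbη =>
      hbdd (η / 2) ⟨by linarith [hη.1], by linarith [hη.2]⟩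
        (isBoundedUnder_of_le_const_mul_comp hD hσ hbη
          (hvu (η / 2) η (by linarith [hη.1]) (by linarith [hη.1]) hη.2))
    have hzero : ∀ w : ℝ → ℝ → ℝ, (∀ η ∈ Ioo 0 δ, ¬ IsBoundedUnder (· ≤ ·) atTop (w η)) →
        Tendsto (fun η => limsup (w η) atTop) (𝓝[>] 0) (𝓝 0) := fun w hw =>
      tendsto_const_nhds.congr' <| eventually_of_mem (Ioo_mem_nhdsGT hδ) fun η hη =>
        (Real.limsup_of_not_isBoundedUnder (hw η hη)).symm
    exact iff_of_true (hzero u hunbdd) (hzero v hbdd)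

end LimsupTransfer

theorem lintegral_mul_measure_Ioc_sub_eq {ν μ : Measure ℝ} [SFinite ν] [SFinite μ]
    {w : ℝ → ℝ≥0∞} (hw : AEMeasurable w ν) (x h : ℝ) :
    ∫⁻ s, w s * μ (Ioc (x - s - h) (x - s)) ∂ν =
      ∫⁻ y, ∫⁻ s in Ioc (x - y - h) (x - y), w s ∂ν ∂μ := by
  classical
  set E : Set (ℝ × ℝ) := (fun p => p.1 + p.2) ⁻¹' Ioc (x - h) x
  have hE : MeasurableSet E := measurableSet_Ioc.preimage (measurable_fst.add measurable_snd)
  have hmem₁ : ∀ s y, (s, y) ∈ E ↔ y ∈ Ioc (x - s - h) (x - s) := fun s y => by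
    simp only [E, mem_preimage, mem_Ioc]
    constructor <;> rintro ⟨h₁, h₂⟩ <;> constructor <;> linarith
  have hmem₂ : ∀ s y, (s, y) ∈ E ↔ s ∈ Ioc (x - y - h) (x - y) := fun s y => by
    simp only [E, mem_preimage, mem_Ioc]
    constructor <;> rintro ⟨h₁, h₂⟩ <;> constructor <;> linarith
  calc ∫⁻ s, w s * μ (Ioc (x - s - h) (x - s)) ∂ν
      = ∫⁻ s, ∫⁻ y, E.indicator (fun p => w p.1) (s, y) ∂μ ∂ν := by
        refine lintegral_congr fun s => ?_
        rw [← lintegral_indicator_const measurableSet_Ioc]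
        congr 1 with y
        simp [indicator_apply, hmem₁]
    _ = ∫⁻ y, ∫⁻ s, E.indicator (fun p => w p.1) (s, y) ∂ν ∂μ :=
        lintegral_lintegral_swap (hw.comp_fst.indicator hE)
    _ = ∫⁻ y, ∫⁻ s in Ioc (x - y - h) (x - y), w s ∂ν ∂μ := by
        refine lintegral_congr fun y => ?_
        rw [← lintegral_indicator measurableSet_Ioc]
        congr 1 with s
        simp [indicator_apply, hmem₂]

theorem sq_div_le_one_add_mul_sq_div {a b s t h : ℝ} (ha : 0 ≤ a) (hab : a ≤ b) (hs : 1 ≤ s)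
    (hst : s ≤ t) (hth : t ≤ s + h) : a ^ 2 / s ≤ (1 + h) * (b ^ 2 / t) := by
  have ht : t ≤ (1 + h) * s := by nlinarith
  have hh : 0 < 1 + h := by linarith
  calc a ^ 2 / s ≤ b ^ 2 / s := div_le_div_of_nonneg_right (pow_le_pow_left₀ ha hab 2) (by linarith)
    _ = (1 + h) * (b ^ 2 / ((1 + h) * s)) := by field_simp
    _ ≤ (1 + h) * (b ^ 2 / t) := by gcongr; nlinarith

theorem setLIntegral_Ioc_inter_le {f : ℝ → ℝ≥0∞} {M : ℝ≥0∞} {a h : ℝ} {K : Set ℝ}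
    (hf : ∀ s ∈ Ioc (a - h) a ∩ K, f s ≤ M) :
    ∫⁻ s in Ioc (a - h) a ∩ K, f s ≤ M * ENNReal.ofReal h :=
  calc ∫⁻ s in Ioc (a - h) a ∩ K, f s ≤ ∫⁻ _ in Ioc (a - h) a ∩ K, M :=
        setLIntegral_mono measurable_const hf
    _ = M * volume (Ioc (a - h) a ∩ K) := setLIntegral_const _ _
    _ ≤ M * ENNReal.ofReal h := by
        gcongr
        exact (measure_mono inter_subset_left).trans_eq (by rw [Real.volume_Ioc, sub_sub_cancel])

theorem le_setLIntegral_Ioc {f : ℝ → ℝ≥0∞} {m : ℝ≥0∞} {a h : ℝ}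
    (hf : ∀ s ∈ Ioc a (a + h), m ≤ f s) :
    m * ENNReal.ofReal h ≤ ∫⁻ s in Ioc a (a + h), f s :=
  calc m * ENNReal.ofReal h = ∫⁻ _ in Ioc a (a + h), m := by
        rw [setLIntegral_const, Real.volume_Ioc, add_sub_cancel_left]
    _ ≤ ∫⁻ s in Ioc a (a + h), f s := setLIntegral_mono' measurableSet_Ioc hf

theorem setLIntegral_ofReal_mul_mul_ofReal {μ : Measure ℝ} {J : Set ℝ} (hJ : MeasurableSet J)
    {f : ℝ → ℝ} {k h : ℝ} (hf : ∀ y ∈ J, 0 ≤ f y) (hk : 0 ≤ k) (hh : 0 ≤ h) :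
    ∫⁻ y in J, ENNReal.ofReal (f y * k) * ENNReal.ofReal h ∂μ =
      ENNReal.ofReal (h * k) * ∫⁻ y in J, ENNReal.ofReal (f y) ∂μ := by
  rw [← lintegral_const_mul' _ _ ENNReal.ofReal_ne_top]
  refine setLIntegral_congr_fun hJ fun y hy => ?_
  rw [← ENNReal.ofReal_mul (mul_nonneg (hf y hy) hk), ← ENNReal.ofReal_mul (mul_nonneg hh hk)]
  congr 1
  ring

theorem Asymptotics.IsEquivalent.eventually_half_le_and_le_two_mul {α : Type*} {l : Filter α}
    {u v : α → ℝ} (huv : u ~[l] v) (hv : ∀ᶠ x in l, 0 < v x) :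
    ∀ᶠ x in l, v x / 2 ≤ u x ∧ u x ≤ 2 * v x := by
  filter_upwards [huv.isLittleO.def (by norm_num : (0 : ℝ) < 1 / 2), hv] with x hx hvx
  rw [Pi.sub_apply, Real.norm_eq_abs, Real.norm_eq_abs, abs_of_pos hvx, abs_le] at hx
  constructor <;> linarith [hx.1, hx.2]

noncomputable def starWeight (F : Measure ℝ) (A : ℝ → ℝ) (x s : ℝ) : ℝ :=
  A s ^ 2 / s * ((x - s) / (F (Ioi (x - s))).toReal)

/-- The integral of (★) in `ℝ≥0∞`, with `r(x - s)` split into `(x - s) / F((x - s, ∞))` and the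
`F`-mass of `(x - s - h, x - s]`, so that Tonelli applies. -/
noncomputable def condStarLIntegral (F : Measure ℝ) (A : ℝ → ℝ) (h b x : ℝ) : ℝ≥0∞ :=
  ∫⁻ s in Ioc 1 b, ENNReal.ofReal (starWeight F A x s) * F (Ioc (x - s - h) (x - s))

noncomputable def condNLIntegral (F : Measure ℝ) (A : ℝ → ℝ) (c x : ℝ) : ℝ≥0∞ :=
  ∫⁻ y in Ioc (x - c) (x - 1), ENNReal.ofReal (A (x - y) ^ 2 / (x - y)) ∂F

noncomputable def condStarQuantity (F : Measure ℝ) (A : ℝ → ℝ) (h η x : ℝ) : ℝ :=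
  1 / A x ^ 2 * ∫ s in (1 : ℝ)..(η * x), A s ^ 2 / s * rr F h (x - s)

noncomputable def condNQuantity (F : Measure ℝ) (A : ℝ → ℝ) (η x : ℝ) : ℝ :=
  x / A x * ∫ y, Set.indicator {s : ℝ | 1 ≤ x - s ∧ x - s < η * x}
    (fun s => A (x - s) ^ 2 / (x - s)) y ∂F

theorem eventually_one_le_mul {η : ℝ} (hη : 0 < η) : ∀ᶠ x in atTop, 1 ≤ η * x :=
  (tendsto_id.const_mul_atTop hη).eventually_ge_atTop 1

theorem antitone_measure_Ioi_toReal (F : Measure ℝ) [IsFiniteMeasure F] :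
    Antitone fun z => (F (Ioi z)).toReal := fun _ _ hab =>
  ENNReal.toReal_mono (measure_ne_top F _) (measure_mono (Ioi_subset_Ioi hab))

section Comparison

variable {F : Measure ℝ} {A : ℝ → ℝ}

theorem rr_nonneg {h x : ℝ} (hx : 0 ≤ x) : 0 ≤ rr F h x := by
  unfold rr
  positivity

theorem condStarQuantity_nonneg {h η x : ℝ} (h1 : 1 ≤ η * x) (hx : η * x ≤ x) :
    0 ≤ condStarQuantity F A h η x :=
  mul_nonneg (by positivity) <| intervalIntegral.integral_nonneg h1 fun s hs =>
    mul_nonneg (div_nonneg (sq_nonneg _) (by linarith [hs.1])) (rr_nonneg (by linarith [hs.2]))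

theorem condNQuantity_nonneg (hApos : ∀ x, 0 ≤ x → 0 < A x) {η x : ℝ} (hx : 0 ≤ x) :
    0 ≤ condNQuantity F A η x :=
  mul_nonneg (div_nonneg hx (hApos x hx).le) <| integral_nonneg fun y =>
    indicator_nonneg (fun s hs => div_nonneg (sq_nonneg _) (by linarith [hs.1])) y

theorem condNQuantity_eq_toReal (hAmono : MonotoneOn A (Ici 0)) (η x : ℝ) :
    condNQuantity F A η x = x / A x * (condNLIntegral F A (η * x) x).toReal := by
  have hset : {s : ℝ | 1 ≤ x - s ∧ x - s < η * x} = Ioc (x - η * x) (x - 1) := by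
    ext y
    show 1 ≤ x - y ∧ x - y < η * x ↔ x - η * x < y ∧ y ≤ x - 1
    constructor <;> rintro ⟨h₁, h₂⟩ <;> constructor <;> linarith
  have hanti : AntitoneOn (fun y => A (x - y)) (Ioc (x - η * x) (x - 1)) :=
    fun y₁ hy₁ y₂ hy₂ hy => hAmono (mem_Ici.2 (by linarith [hy₂.2]))
      (mem_Ici.2 (by linarith [hy₁.2])) (by linarith)
  rw [condNQuantity, hset, integral_indicator measurableSet_Ioc,
    integral_eq_lintegral_of_nonneg_ae, condNLIntegral]
  · exact (ae_restrict_iff' measurableSet_Ioc).2 <| ae_of_all _ fun y hy =>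
      div_nonneg (sq_nonneg _) (by linarith [hy.2])
  · exact (((aemeasurable_restrict_of_antitoneOn measurableSet_Ioc hanti).pow_const 2).div
      (by fun_prop)).aestronglyMeasurable

theorem starWeight_le {h x s u a c : ℝ} (hA0 : 0 ≤ A s) (hAsu : A s ≤ A u) (hs : 1 ≤ s)
    (hsu : s ≤ u) (hus : u ≤ s + h) (hxs : 0 ≤ x - s) (hxa : x - s ≤ a) (hc : 0 < c)
    (hcT : c ≤ (F (Ioi (x - s))).toReal) :
    starWeight F A x s ≤ A u ^ 2 / u * ((1 + h) * (a / c)) :=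
  (mul_le_mul (sq_div_le_one_add_mul_sq_div hA0 hAsu hs hsu hus)
    (div_le_div₀ (hxs.trans hxa) hxa hc hcT) (div_nonneg hxs ENNReal.toReal_nonneg)
    (mul_nonneg (by linarith) (div_nonneg (sq_nonneg _) (by linarith)))).trans_eq (by ring)

theorem le_starWeight {h x s u a b : ℝ} (hA0 : 0 ≤ A u) (hAus : A u ≤ A s) (hu : 1 ≤ u)
    (hus : u ≤ s) (hsu : s ≤ u + h) (ha : 0 ≤ a) (hax : a ≤ x - s)
    (hT : 0 < (F (Ioi (x - s))).toReal) (hTb : (F (Ioi (x - s))).toReal ≤ b) :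
    A u ^ 2 / u * (a / b / (1 + h)) ≤ starWeight F A x s :=
  calc A u ^ 2 / u * (a / b / (1 + h)) = A u ^ 2 / u / (1 + h) * (a / b) := by ring
    _ ≤ starWeight F A x s :=
      mul_le_mul ((div_le_iff₀ (by linarith)).2 (by
          linarith [sq_div_le_one_add_mul_sq_div (h := h) hA0 hAus hu hus hsu]))
        (div_le_div₀ (ha.trans hax) hax hT hTb) (div_nonneg ha (hT.le.trans hTb))
        (div_nonneg (sq_nonneg _) (by linarith))

variable [IsFiniteMeasure F]

theorem aemeasurable_starWeight (hAmono : MonotoneOn A (Ici 0)) (x b : ℝ) :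
    AEMeasurable (starWeight F A x) (volume.restrict (Ioc 1 b)) := by
  have hA : AEMeasurable A (volume.restrict (Ioc 1 b)) :=
    aemeasurable_restrict_of_monotoneOn measurableSet_Ioc
      (hAmono.mono fun s hs => mem_Ici.2 (zero_le_one.trans hs.1.le))
  have hT : Measurable fun s => (F (Ioi (x - s))).toReal :=
    (antitone_measure_Ioi_toReal F).measurable.comp (measurable_const.sub measurable_id)
  unfold starWeight
  fun_prop

theorem condStarQuantity_eq_toReal (hAmono : MonotoneOn A (Ici 0)) {h η x : ℝ}
    (h1 : 1 ≤ η * x) (hx : η * x ≤ x) :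
    condStarQuantity F A h η x = (condStarLIntegral F A h (η * x) x).toReal / A x ^ 2 := by
  have hIoc : MeasurableSet ({p : ℝ × ℝ | x - p.1 - h < p.2} ∩ {p | p.2 ≤ x - p.1}) :=
    (measurableSet_lt (by fun_prop) (by fun_prop)).inter
      (measurableSet_le (by fun_prop) (by fun_prop))
  have hF : Measurable fun s => (F (Ioc (x - s - h) (x - s))).toReal :=
    (measurable_measure_prodMk_left hIoc).ennreal_toReal
  have hw0 : ∀ s ∈ Ioc 1 (η * x), 0 ≤ starWeight F A x s := fun s hs =>
    mul_nonneg (div_nonneg (sq_nonneg _) (by linarith [hs.1]))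
      (div_nonneg (by linarith [hs.2]) ENNReal.toReal_nonneg)
  have heq : EqOn (fun s => A s ^ 2 / s * rr F h (x - s))
      (fun s => starWeight F A x s * (F (Ioc (x - s - h) (x - s))).toReal) (Ioc 1 (η * x)) :=
    fun s _ => by simp only [rr, starWeight]; ring
  rw [condStarQuantity, intervalIntegral.integral_of_le h1,
    setIntegral_congr_fun measurableSet_Ioc heq, integral_eq_lintegral_of_nonneg_ae,
    condStarLIntegral, one_div_mul_eq_div]
  · congr 2
    refine setLIntegral_congr_fun measurableSet_Ioc fun s hs => ?_
    rw [ENNReal.ofReal_mul (hw0 s hs), ENNReal.ofReal_toReal (measure_ne_top F _)]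
  · exact (ae_restrict_iff' measurableSet_Ioc).2 <| ae_of_all _ fun s hs =>
      mul_nonneg (hw0 s hs) ENNReal.toReal_nonneg
  · exact ((aemeasurable_starWeight hAmono x _).mul hF.aemeasurable).aestronglyMeasurable

theorem condNLIntegral_ne_top (hApos : ∀ x, 0 ≤ x → 0 < A x) (hAmono : MonotoneOn A (Ici 0))
    (c x : ℝ) : condNLIntegral F A c x ≠ ⊤ := by
  refine (setLIntegral_lt_top_of_le_nnreal (measure_ne_top F _)
    ⟨(A c ^ 2).toNNReal, fun y hy => ENNReal.ofReal_le_ofReal ?_⟩).ne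
  have h1 : 1 ≤ x - y := by linarith [hy.2]
  calc A (x - y) ^ 2 / (x - y) ≤ A (x - y) ^ 2 := div_le_self (sq_nonneg _) h1
    _ ≤ A c ^ 2 := pow_le_pow_left₀ (hApos _ (by linarith)).le
        (hAmono (mem_Ici.2 (by linarith)) (mem_Ici.2 (by linarith [hy.1])) (by linarith [hy.1])) 2

theorem condStarLIntegral_ne_top (hApos : ∀ x, 0 ≤ x → 0 < A x) (hAmono : MonotoneOn A (Ici 0))
    {h b x : ℝ} (hbx : b ≤ x) (hT : 0 < (F (Ioi (x - 1))).toReal) :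
    condStarLIntegral F A h b x ≠ ⊤ := by
  set M := A b ^ 2 * (x / (F (Ioi (x - 1))).toReal)
  have hbound : ∀ s ∈ Ioc 1 b, ENNReal.ofReal (starWeight F A x s) * F (Ioc (x - s - h) (x - s))
      ≤ ENNReal.ofReal M * F univ := fun s hs => by
    have hs0 : 0 ≤ s := by linarith [hs.1]
    refine mul_le_mul' (ENNReal.ofReal_le_ofReal ?_) (measure_mono (subset_univ _))
    refine mul_le_mul ?_ ?_ (div_nonneg (by linarith [hs.2]) ENNReal.toReal_nonneg) (sq_nonneg _)
    · exact (div_le_self (sq_nonneg _) hs.1.le).trans (pow_le_pow_left₀ (hApos s hs0).le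
        (hAmono (mem_Ici.2 hs0) (mem_Ici.2 (hs0.trans hs.2)) hs.2) 2)
    · exact div_le_div₀ (by linarith [hs.2]) (by linarith) hT
        (antitone_measure_Ioi_toReal F (by linarith [hs.1]))
  refine ne_top_of_le_ne_top ?_ (setLIntegral_mono' measurableSet_Ioc hbound)
  rw [setLIntegral_const]
  exact ENNReal.mul_ne_top (ENNReal.mul_ne_top ENNReal.ofReal_ne_top (measure_ne_top F _))
    measure_Ioc_lt_top.ne

theorem condStarLIntegral_le (hApos : ∀ x, 0 ≤ x → 0 < A x) (hAmono : MonotoneOn A (Ici 0))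
    (hT : ∀ᶠ z in atTop, 1 / A z / 2 ≤ (F (Ioi z)).toReal) {h η η' : ℝ} (hh : 0 ≤ h)
    (hηη' : η < η') (hη : η < 1) :
    ∀ᶠ x in atTop, condStarLIntegral F A h (η * x) x ≤
      ENNReal.ofReal (2 * h * (1 + h) * x * A x) * condNLIntegral F A (η' * x) x := by
  obtain ⟨x₁, hx₁⟩ := eventually_atTop.1 (hT.and (eventually_ge_atTop 0))
  have hgap : ∀ᶠ x in atTop, η * x + h < η' * x := by
    filter_upwards [eventually_gt_atTop (h / (η' - η))] with x hx
    nlinarith [(div_lt_iff₀ (sub_pos.2 hηη')).1 hx]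
  filter_upwards [eventually_ge_atTop (x₁ / (1 - η)), eventually_ge_atTop 0, hgap]
    with x hx hx0 hηx
  have hx₁x : x₁ ≤ (1 - η) * x := by linarith [(div_le_iff₀ (sub_pos.2 hη)).1 hx]
  have hAx : 0 < A x := hApos x hx0
  set J := Ioc (x - η' * x) (x - 1)
  set K := (1 + h) * (x / (1 / A x / 2))
  set g : ℝ → ℝ≥0∞ := fun y => ENNReal.ofReal (A (x - y) ^ 2 / (x - y) * K)
  -- the inner interval `(x - y - h, x - y] ∩ (1, η x]` is nonempty only if `y ∈ J`
  have hweight : ∀ y, ∀ s ∈ Ioc (x - y - h) (x - y) ∩ Ioc 1 (η * x),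
      ENNReal.ofReal (starWeight F A x s) ≤ J.indicator g y := by
    rintro y s ⟨⟨hsu, hsu'⟩, hs1, hsη⟩
    rw [indicator_of_mem (show y ∈ J from ⟨by linarith, by linarith⟩)]
    obtain ⟨hTs, hxs0⟩ := hx₁ (x - s) (by nlinarith)
    have hAxs : A (x - s) ≤ A x := hAmono (mem_Ici.2 hxs0) (mem_Ici.2 hx0) (by linarith)
    have := hApos _ hxs0
    refine ENNReal.ofReal_le_ofReal (starWeight_le (hApos s (by linarith)).le
      (hAmono (mem_Ici.2 (by linarith)) (mem_Ici.2 (by linarith)) hsu') hs1.le hsu' (by linarith)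
      hxs0 (by linarith) (by positivity) (le_trans ?_ hTs))
    gcongr
  have hinner : ∀ y, ∫⁻ s in Ioc (x - y - h) (x - y), ENNReal.ofReal (starWeight F A x s)
      ∂(volume.restrict (Ioc 1 (η * x))) ≤ J.indicator g y * ENNReal.ofReal h := fun y => by
    rw [Measure.restrict_restrict measurableSet_Ioc]
    exact setLIntegral_Ioc_inter_le (hweight y)
  have hK : h * K = 2 * h * (1 + h) * x * A x := by simp only [K]; field_simp
  calc condStarLIntegral F A h (η * x) x
      = ∫⁻ y, ∫⁻ s in Ioc (x - y - h) (x - y), ENNReal.ofReal (starWeight F A x s)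
          ∂(volume.restrict (Ioc 1 (η * x))) ∂F :=
        lintegral_mul_measure_Ioc_sub_eq (aemeasurable_starWeight hAmono x _).ennreal_ofReal x h
    _ ≤ ∫⁻ y, J.indicator g y * ENNReal.ofReal h ∂F := lintegral_mono hinner
    _ = ENNReal.ofReal (2 * h * (1 + h) * x * A x) * condNLIntegral F A (η' * x) x := by
        rw [lintegral_mul_const' _ _ ENNReal.ofReal_ne_top, lintegral_indicator measurableSet_Ioc,
          ← lintegral_mul_const' _ _ ENNReal.ofReal_ne_top, ← hK, condNLIntegral]
        exact setLIntegral_ofReal_mul_mul_ofReal measurableSet_Ioc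
          (fun y hy => div_nonneg (sq_nonneg _) (by linarith [hy.2])) (by positivity) hh

theorem ofReal_mul_condNLIntegral_le (hApos : ∀ x, 0 ≤ x → 0 < A x)
    (hAmono : MonotoneOn A (Ici 0))
    (hT : ∀ᶠ z in atTop, 1 / A z / 2 ≤ (F (Ioi z)).toReal ∧ (F (Ioi z)).toReal ≤ 2 * (1 / A z))
    (hA : ∀ᶠ x in atTop, 1 / 2 * A x < A (3 / 4 * x)) {h η η' : ℝ} (hh : 0 ≤ h)
    (hηη' : η < η') (hη : η ≤ 1 / 4) :
    ∀ᶠ x in atTop, ENNReal.ofReal (3 * h * x * A x / (16 * (1 + h))) * condNLIntegral F A (η * x) x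
      ≤ condStarLIntegral F A h (η' * (x + h)) (x + h) := by
  obtain ⟨x₁, hx₁⟩ := eventually_atTop.1 (hT.and (eventually_ge_atTop 0))
  have hgap : ∀ᶠ x in atTop, η * x + h ≤ η' * (x + h) := by
    filter_upwards [eventually_ge_atTop ((1 - η') * h / (η' - η))] with x hx
    nlinarith [(div_le_iff₀ (sub_pos.2 hηη')).1 hx]
  filter_upwards [eventually_ge_atTop (4 / 3 * x₁), eventually_ge_atTop 0, hA, hgap]
    with x hx hx0 hAx34 hηx
  have hAx : 0 < A x := hApos x hx0
  have hT34 : (F (Ioi (3 / 4 * x))).toReal ≤ 4 / A x := by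
    refine (hx₁ (3 / 4 * x) (by linarith)).1.2.trans ?_
    rw [mul_one_div, div_le_div_iff₀ (by linarith) hAx]
    linarith
  set J := Ioc (x - η * x) (x - 1)
  set k := 3 / 4 * x / (4 / A x) / (1 + h)
  set c : ℝ → ℝ := fun y => A (x - y) ^ 2 / (x - y) * k
  have hweight : ∀ y ∈ J, ∀ s ∈ Ioc (x - y) (x - y + h),
      ENNReal.ofReal (c y) ≤ ENNReal.ofReal (starWeight F A (x + h) s) := by
    rintro y ⟨hyη, hy1⟩ s ⟨hus, hsu⟩
    have hz : 3 / 4 * x ≤ x + h - s := by nlinarith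
    obtain ⟨⟨hTz, -⟩, hz0⟩ := hx₁ (x + h - s) (by linarith)
    have := hApos _ hz0
    exact ENNReal.ofReal_le_ofReal (le_starWeight (hApos _ (by linarith)).le
      (hAmono (mem_Ici.2 (by linarith)) (mem_Ici.2 (by linarith)) hus.le) (by linarith) hus.le hsu
      (by positivity) hz (lt_of_lt_of_le (by positivity) hTz)
      ((antitone_measure_Ioi_toReal F hz).trans hT34))
  have hinner : ∀ y ∈ J, ENNReal.ofReal (c y) * ENNReal.ofReal h ≤
      ∫⁻ s in Ioc (x + h - y - h) (x + h - y), ENNReal.ofReal (starWeight F A (x + h) s)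
        ∂(volume.restrict (Ioc 1 (η' * (x + h)))) := fun y hy => by
    rw [Measure.restrict_restrict measurableSet_Ioc]
    calc ENNReal.ofReal (c y) * ENNReal.ofReal h
        ≤ ∫⁻ s in Ioc (x - y) (x - y + h), ENNReal.ofReal (starWeight F A (x + h) s) :=
          le_setLIntegral_Ioc (hweight y hy)
      _ ≤ _ := by
          refine lintegral_mono_set fun s hs => ⟨⟨?_, ?_⟩, ?_, ?_⟩ <;>
            linarith [hs.1, hs.2, hy.1, hy.2]
  have hk : 3 * h * x * A x / (16 * (1 + h)) = h * k := by simp only [k]; field_simp; ring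
  calc ENNReal.ofReal (3 * h * x * A x / (16 * (1 + h))) * condNLIntegral F A (η * x) x
      = ∫⁻ y in J, ENNReal.ofReal (c y) * ENNReal.ofReal h ∂F := by
        rw [hk, condNLIntegral]
        exact (setLIntegral_ofReal_mul_mul_ofReal measurableSet_Ioc
          (fun y hy => div_nonneg (sq_nonneg _) (by linarith [hy.2])) (by positivity) hh).symm
    _ ≤ ∫⁻ y in J, ∫⁻ s in Ioc (x + h - y - h) (x + h - y),
          ENNReal.ofReal (starWeight F A (x + h) s) ∂(volume.restrict (Ioc 1 (η' * (x + h)))) ∂F :=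
        setLIntegral_mono' measurableSet_Ioc hinner
    _ ≤ ∫⁻ y, ∫⁻ s in Ioc (x + h - y - h) (x + h - y),
          ENNReal.ofReal (starWeight F A (x + h) s) ∂(volume.restrict (Ioc 1 (η' * (x + h)))) ∂F :=
        setLIntegral_le_lintegral _ _
    _ = condStarLIntegral F A h (η' * (x + h)) (x + h) :=
        (lintegral_mul_measure_Ioc_sub_eq
          (aemeasurable_starWeight hAmono (x + h) _).ennreal_ofReal (x + h) h).symm

theorem condStarQuantity_le (hApos : ∀ x, 0 ≤ x → 0 < A x) (hAmono : MonotoneOn A (Ici 0))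
    (hT : ∀ᶠ z in atTop, 1 / A z / 2 ≤ (F (Ioi z)).toReal) {h η η' : ℝ} (hh : 0 ≤ h)
    (hη0 : 0 < η) (hηη' : η < η') (hη : η < 1) :
    ∀ᶠ x in atTop, condStarQuantity F A h η x ≤ 2 * h * (1 + h) * condNQuantity F A η' x := by
  filter_upwards [condStarLIntegral_le hApos hAmono hT hh hηη' hη, eventually_one_le_mul hη0,
    eventually_ge_atTop 0] with x hle h1 hx0
  have hAx := hApos x hx0
  have hle' := ENNReal.toReal_mono
    (ENNReal.mul_ne_top ENNReal.ofReal_ne_top (condNLIntegral_ne_top hApos hAmono _ _)) hle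
  rw [ENNReal.toReal_mul, ENNReal.toReal_ofReal (by positivity)] at hle'
  rw [condStarQuantity_eq_toReal hAmono h1 (by nlinarith), condNQuantity_eq_toReal hAmono]
  calc _ ≤ 2 * h * (1 + h) * x * A x * (condNLIntegral F A (η' * x) x).toReal / A x ^ 2 := by
        gcongr
    _ = _ := by field_simp

theorem condNQuantity_le (hApos : ∀ x, 0 ≤ x → 0 < A x) (hAmono : MonotoneOn A (Ici 0))
    (hT : ∀ᶠ z in atTop, 1 / A z / 2 ≤ (F (Ioi z)).toReal ∧ (F (Ioi z)).toReal ≤ 2 * (1 / A z))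
    (hA34 : ∀ᶠ x in atTop, 1 / 2 * A x < A (3 / 4 * x))
    (hA2 : ∀ᶠ x in atTop, A (2 * x) < 2 * A x) {h η η' : ℝ} (hh : 0 < h)
    (hηη' : η < η') (hη : η ≤ 1 / 4) (hη'0 : 0 < η') (hη' : η' ≤ 1) :
    ∀ᶠ x in atTop,
      condNQuantity F A η x ≤ 64 * (1 + h) / (3 * h) * condStarQuantity F A h η' (x + h) := by
  obtain ⟨x₁, hx₁⟩ := eventually_atTop.1 (hT.and (eventually_ge_atTop 0))
  filter_upwards [ofReal_mul_condNLIntegral_le hApos hAmono hT hA34 hh.le hηη' hη,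
    eventually_one_le_mul hη'0, hA2, eventually_ge_atTop h, eventually_ge_atTop (x₁ + 1),
    eventually_ge_atTop 0] with x hle h1 hAx2 hxh hxx₁ hx0
  have hAx := hApos x hx0
  have hAxh := hApos (x + h) (by linarith)
  have hTpos : 0 < (F (Ioi (x + h - 1))).toReal := by
    obtain ⟨⟨hT', -⟩, hz0⟩ := hx₁ (x + h - 1) (by linarith)
    have := hApos _ hz0
    exact lt_of_lt_of_le (by positivity) hT'
  have hle' := ENNReal.toReal_mono
    (condStarLIntegral_ne_top hApos hAmono (by nlinarith) hTpos) hle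
  rw [ENNReal.toReal_mul, ENNReal.toReal_ofReal (by positivity)] at hle'
  have hAsq : A (x + h) ^ 2 ≤ 4 * A x ^ 2 := by
    have := hAmono (mem_Ici.2 (by linarith)) (mem_Ici.2 (by linarith))
      (show x + h ≤ 2 * x by linarith)
    nlinarith
  rw [condNQuantity_eq_toReal hAmono,
    condStarQuantity_eq_toReal hAmono (x := x + h) (by nlinarith) (by nlinarith)]
  calc x / A x * (condNLIntegral F A (η * x) x).toReal
      = 16 * (1 + h) / (3 * h) * (3 * h * x * A x / (16 * (1 + h)) *
          (condNLIntegral F A (η * x) x).toReal) / A x ^ 2 := by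
        field_simp
    _ ≤ 16 * (1 + h) / (3 * h) *
          (condStarLIntegral F A h (η' * (x + h)) (x + h)).toReal / A x ^ 2 := by
        gcongr
    _ ≤ 16 * (1 + h) / (3 * h) *
          (condStarLIntegral F A h (η' * (x + h)) (x + h)).toReal / (A (x + h) ^ 2 / 4) := by
        gcongr
        linarith
    _ = _ := by field_simp; ring

end Comparison

theorem eventually_mul_lt_apply_mul {A : ℝ → ℝ} {l L c : ℝ}
    (hA : Tendsto (fun x => A (l * x) / A x) atTop (𝓝 L)) (hpos : ∀ᶠ x in atTop, 0 < A x)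
    (hc : c < L) : ∀ᶠ x in atTop, c * A x < A (l * x) := by
  filter_upwards [hA.eventually_const_lt hc, hpos] with x hx hAx
  exact (lt_div_iff₀ hAx).1 hx

theorem eventually_apply_mul_lt_mul {A : ℝ → ℝ} {l L c : ℝ}
    (hA : Tendsto (fun x => A (l * x) / A x) atTop (𝓝 L)) (hpos : ∀ᶠ x in atTop, 0 < A x)
    (hc : L < c) : ∀ᶠ x in atTop, A (l * x) < c * A x := by
  filter_upwards [hA.eventually_lt_const hc, hpos] with x hx hAx
  exact (div_lt_iff₀ hAx).1 hx

theorem condStar_iff_condN_general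
    (F : Measure ℝ) [IsProbabilityMeasure F]
    (α : ℝ) (hα2 : α < 1)
    (A : ℝ → ℝ)
    (hApos : ∀ x : ℝ, 0 ≤ x → 0 < A x)
    (hAmono : StrictMonoOn A (Set.Ici 0))
    (hAreg : ∀ l : ℝ, 0 < l →
      Tendsto (fun x : ℝ => A (l * x) / A x) atTop (nhds (l ^ α)))
    (hT1 : (fun x : ℝ => (F (Set.Ioi x)).toReal) ~[atTop] fun x : ℝ => 1 / A x)
    (h : ℝ) (hh : 0 < h)
    :
    CondStar F A h ↔ CondN F A := by
  have hpos : ∀ᶠ x in atTop, 0 < A x := (eventually_ge_atTop 0).mono hApos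
  have hT := hT1.eventually_half_le_and_le_two_mul (hpos.mono fun _ => one_div_pos.2)
  have hA34 : ∀ᶠ x in atTop, 1 / 2 * A x < A (3 / 4 * x) :=
    eventually_mul_lt_apply_mul (hAreg _ (by norm_num)) hpos <| by
      have := Real.rpow_le_rpow_of_exponent_ge (by norm_num : (0 : ℝ) < 3 / 4) (by norm_num) hα2.le
      rw [Real.rpow_one] at this
      linarith
  have hA2 : ∀ᶠ x in atTop, A (2 * x) < 2 * A x :=
    eventually_apply_mul_lt_mul (hAreg _ two_pos) hpos <| by
      simpa using Real.rpow_lt_rpow_of_exponent_lt (by norm_num : (1 : ℝ) < 2) hα2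
  exact tendsto_limsup_iff_of_le_const_mul (u := condStarQuantity F A h) (v := condNQuantity F A)
    (δ := 1 / 4) (by norm_num) (by positivity) (by positivity) tendsto_id
    (tendsto_atTop_add_const_right _ h tendsto_id)
    (fun η hη => by
      filter_upwards [eventually_one_le_mul hη.1, eventually_ge_atTop 0] with x h1 hx0
      exact condStarQuantity_nonneg h1 (by nlinarith [hη.2]))
    (fun _ _ => (eventually_ge_atTop 0).mono fun _ hx => condNQuantity_nonneg hApos hx)
    (fun _ _ hη hηη' hη' => condStarQuantity_le hApos hAmono.monotoneOn
      (hT.mono fun _ => And.left) hh.le hη hηη' (by linarith))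
    (fun _ _ hη hηη' hη' => condNQuantity_le hApos hAmono.monotoneOn hT hA34 hA2 hh hηη'
      (by linarith) (by linarith) (by linarith))

/-- **Lemma 3.1 (first part)**: under (T1), condition (★) is equivalent to
condition (N), its reformulation in terms of the law `F` itself. -/
theorem condStar_iff_condN
    (F : Measure ℝ) [IsProbabilityMeasure F]
    (hFsupp : F (Set.Iio 0) = 0)
    (α : ℝ) (hα1 : 0 < α) (hα2 : α < 1)
    (A : ℝ → ℝ)
    (hApos : ∀ x : ℝ, 0 ≤ x → 0 < A x)
    (hAcont : ContinuousOn A (Set.Ici 0))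
    (hAmono : StrictMonoOn A (Set.Ici 0))
    (hAreg : ∀ l : ℝ, 0 < l →
      Tendsto (fun x : ℝ => A (l * x) / A x) atTop (nhds (l ^ α)))
    (hT1 : (fun x : ℝ => (F (Set.Ioi x)).toReal) ~[atTop] fun x : ℝ => 1 / A x)
    (h : ℝ) (hh : 0 < h)
    (hspan : (∃ t, IsArithSpan F t) → IsGreatest {t | IsArithSpan F t} h)
    :
    CondStar F A h ↔ CondN F A :=
  condStar_iff_condN_general F α hα2 A hApos hAmono hAreg hT1 h hh
end

section
/- Let A : [0,∞) → (0,∞) be continuous, strictly increasing, regularly varying at infinity with index α ∈ (0,1), with A(x) → ∞. Fix arbitrary positive sequences (z_n) and (ε_n) with z_n → ∞ and ε_n → 0. Then there exist a constant c ∈ (0,∞), a strictly increasing sequence of indices (n_k), and a Borel probability measure F on (0,∞) with F((x,∞)) ~ 1/A(x) as x → ∞, such that F({z_{n_k}}) ≥ c·ε_{n_k}/A(z_{n_k}) for every k ∈ ℕ. -/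
open MeasureTheory Filter Set Asymptotics Topology

/-!
Since `A` is continuous and increasing, `x ↦ 1 / A (max x x₀)` is the tail of a Stieltjes
measure. Pass to a subsequence along which `∑ ε_{n_k}` converges, add atoms of mass
`c ε_{n_k} / A(z_{n_k})` at the points `z_{n_k}`, and put the remaining mass at `x₀`.
For `x ≥ x₀` the atoms beyond `x` carry mass at most `(c / A x) ∑_{z_{n_k} > x} ε_{n_k}`
because `A` is increasing, and this is `o(1 / A x)` since the tails of a convergent series
vanish. Regular variation with a positive index gives `A x → ∞`: were `A`
bounded, it would converge to a positive limit and `A (2x) / A x` would tend to `1 ≠ 2 ^ α`.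
-/

lemma Monotone.tendsto_atTop_of_tendsto_div {f : ℝ → ℝ} (hf : Monotone f)
    (hpos : ∀ x, 0 < f x) {l c : ℝ} (hl : 0 < l) (hc : c ≠ 1)
    (h : Tendsto (fun x => f (l * x) / f x) atTop (𝓝 c)) : Tendsto f atTop atTop := by
  by_contra hf_top
  have hbdd : BddAbove (range f) := by
    rw [hf.tendsto_atTop_atTop_iff] at hf_top
    push Not at hf_top
    obtain ⟨b, hb⟩ := hf_top
    exact ⟨b, forall_mem_range.2 fun x => (hb x).le⟩
  have hlim := tendsto_atTop_ciSup hf hbdd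
  have hL : (⨆ x, f x) ≠ 0 := ((hpos 0).trans_le (le_ciSup hbdd 0)).ne'
  have hratio := (hlim.comp (tendsto_id.const_mul_atTop hl)).div hlim hL
  rw [div_self hL] at hratio
  exact hc (tendsto_nhds_unique h hratio)

lemma tendsto_atTop_of_tendsto_div_rpow {A : ℝ → ℝ} {α : ℝ} (hα : 0 < α)
    (hpos : ∀ x, 0 ≤ x → 0 < A x) (hmono : MonotoneOn A (Ici 0))
    (hreg : Tendsto (fun x => A (2 * x) / A x) atTop (𝓝 (2 ^ α))) :
    Tendsto A atTop atTop := by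
  have hext : ∀ᶠ x in atTop, A (max x 0) = A x := by
    filter_upwards [eventually_ge_atTop 0] with x hx using by rw [max_eq_left hx]
  refine (Monotone.tendsto_atTop_of_tendsto_div (f := fun x => A (max x 0)) ?_ ?_ two_pos
    (Real.one_lt_rpow one_lt_two hα).ne' ?_).congr' hext
  · exact fun x y hxy => hmono (le_max_right x 0) (le_max_right y 0) (max_le_max_right 0 hxy)
  · exact fun x => hpos _ (le_max_right x 0)
  · refine hreg.congr' ?_
    filter_upwards [eventually_ge_atTop 0] with x hx
    rw [max_eq_left hx, max_eq_left (by positivity)]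

lemma Summable.tendsto_tsum_indicator_Ioi {e : ℕ → ℝ} (he : Summable e) (y : ℕ → ℝ) :
    Tendsto (fun x => ∑' k, (y ⁻¹' Ioi x).indicator e k) atTop (𝓝 0) := by
  have hterm : ∀ k, Tendsto (fun x => (y ⁻¹' Ioi x).indicator e k) atTop (𝓝 0) := fun k =>
    tendsto_const_nhds.congr' <| by
      filter_upwards [eventually_ge_atTop (y k)] with x hx
      exact (indicator_of_notMem (show k ∉ y ⁻¹' Ioi x from not_lt.2 hx) e).symm
  simpa using tendsto_tsum_of_dominated_convergence he.norm hterm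
    (Eventually.of_forall fun x k => norm_indicator_le_norm_self e k)

lemma summable_div_and_tsum_div_le {A : ℝ → ℝ} (hpos : ∀ x, 0 ≤ x → 0 < A x)
    (hmono : MonotoneOn A (Ici 0)) {e y : ℕ → ℝ} (he0 : ∀ k, 0 ≤ e k) (he : Summable e)
    (hy : ∀ k, 0 ≤ y k) :
    Summable (fun k => e k / A (y k)) ∧ ∑' k, e k / A (y k) ≤ (∑' k, e k) / A 0 := by
  have hle : ∀ k, e k / A (y k) ≤ e k / A 0 := fun k =>
    div_le_div_of_nonneg_left (he0 k) (hpos 0 le_rfl) (hmono (mem_Ici.2 le_rfl) (hy k) (hy k))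
  have hs := (he.div_const (A 0)).of_nonneg_of_le
    (fun k => div_nonneg (he0 k) (hpos _ (hy k)).le) hle
  exact ⟨hs, (hs.tsum_le_tsum hle (he.div_const _)).trans_eq tsum_div_const⟩

lemma isEquivalent_inv_add_tsum_indicator_div {A : ℝ → ℝ} (hpos : ∀ x, 0 ≤ x → 0 < A x)
    (hmono : MonotoneOn A (Ici 0)) {e y : ℕ → ℝ} (he0 : ∀ k, 0 ≤ e k) (he : Summable e)
    (hy : ∀ k, 0 ≤ y k) :
    (fun x => (A x)⁻¹ + ∑' k, (y ⁻¹' Ioi x).indicator (fun k => e k / A (y k)) k)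
      ~[atTop] fun x => (A x)⁻¹ := by
  have hterm : ∀ x, 0 ≤ x → ∀ k, (y ⁻¹' Ioi x).indicator (fun k => e k / A (y k)) k ≤
      (A x)⁻¹ * (y ⁻¹' Ioi x).indicator e k := by
    intro x hx k
    by_cases hk : k ∈ y ⁻¹' Ioi x
    · rw [indicator_of_mem hk, indicator_of_mem hk, inv_mul_eq_div]
      exact div_le_div_of_nonneg_left (he0 k) (hpos x hx) (hmono hx (hy k) (le_of_lt hk))
    · simp [indicator_of_notMem hk]
  have htail : (fun x => ∑' k, (y ⁻¹' Ioi x).indicator (fun k => e k / A (y k)) k)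
      =O[atTop] fun x => (A x)⁻¹ * ∑' k, (y ⁻¹' Ioi x).indicator e k := by
    refine IsBigO.of_bound 1 ?_
    filter_upwards [eventually_ge_atTop 0] with x hx
    have hnonneg : ∀ k, 0 ≤ (y ⁻¹' Ioi x).indicator (fun k => e k / A (y k)) k :=
      indicator_nonneg fun k _ => div_nonneg (he0 k) (hpos _ (hy k)).le
    have hsum := (he.indicator (y ⁻¹' Ioi x)).mul_left (A x)⁻¹
    rw [one_mul, Real.norm_of_nonneg (tsum_nonneg hnonneg), tsum_mul_left.symm]
    exact (Summable.tsum_le_tsum (hterm x hx) (hsum.of_nonneg_of_le hnonneg (hterm x hx))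
      hsum).trans (le_abs_self _)
  have hsmall : (fun x => (A x)⁻¹ * ∑' k, (y ⁻¹' Ioi x).indicator e k)
      =o[atTop] fun x => (A x)⁻¹ := by
    simpa using (isBigO_refl (fun x => (A x)⁻¹) atTop).mul_isLittleO
      ((isLittleO_one_iff ℝ).2 (he.tendsto_tsum_indicator_Ioi y))
  refine (htail.trans_isLittleO hsmall).congr_left fun x => ?_
  simp

lemma antitone_inv_comp_max {A : ℝ → ℝ} (hpos : ∀ x, 0 ≤ x → 0 < A x)
    (hmono : MonotoneOn A (Ici 0)) {x₀ : ℝ} (hx₀ : 0 ≤ x₀) :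
    Antitone fun x => (A (max x x₀))⁻¹ :=
  fun _ _ h => inv_anti₀ (hpos _ (hx₀.trans (le_max_right _ _)))
    (hmono (hx₀.trans (le_max_right _ _)) (hx₀.trans (le_max_right _ _)) (max_le_max_right x₀ h))

lemma continuous_inv_comp_max {A : ℝ → ℝ} (hpos : ∀ x, 0 ≤ x → 0 < A x)
    (hcont : ContinuousOn A (Ici 0)) {x₀ : ℝ} (hx₀ : 0 ≤ x₀) :
    Continuous fun x => (A (max x x₀))⁻¹ :=
  (hcont.comp_continuous (continuous_id.max continuous_const)
    fun x => hx₀.trans (le_max_right x x₀)).inv₀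
      fun x => (hpos _ (hx₀.trans (le_max_right x x₀))).ne'

lemma Antitone.exists_measure_Ioi_eq {T : ℝ → ℝ} (hanti : Antitone T) (hcont : Continuous T)
    (htop : Tendsto T atTop (𝓝 0)) {L : ℝ} (hbot : Tendsto T atBot (𝓝 L)) :
    ∃ μ : Measure ℝ, μ univ = ENNReal.ofReal L ∧ (∀ x, μ (Iic x) = ENNReal.ofReal (L - T x)) ∧
      ∀ x, μ (Ioi x) = ENNReal.ofReal (T x) := by
  let f : StieltjesFunction ℝ := ⟨fun x => -T x, hanti.neg, fun x => hcont.neg.continuousWithinAt⟩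
  have hf_top : Tendsto f atTop (𝓝 0) := by simpa using htop.neg
  have hf_bot : Tendsto f atBot (𝓝 (-L)) := hbot.neg
  refine ⟨f.measure, ?_, fun x => ?_, fun x => ?_⟩
  · simpa using f.measure_univ hf_bot hf_top
  · rw [f.measure_Iic hf_bot, sub_neg_eq_add, add_comm, ← sub_eq_add_neg]
  · rw [f.measure_Ioi hf_top, zero_sub, neg_neg]

namespace MeasureTheory.Measure

variable {α : Type*} [MeasurableSpace α]

lemma sum_smul_dirac_apply {a : ℕ → ℝ} (ha : ∀ k, 0 ≤ a k) (hs : Summable a) (y : ℕ → α)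
    {t : Set α} (ht : MeasurableSet t) :
    Measure.sum (fun k => ENNReal.ofReal (a k) • dirac (y k)) t =
      ENNReal.ofReal (∑' k, (y ⁻¹' t).indicator a k) := by
  rw [Measure.sum_apply _ ht, ENNReal.ofReal_tsum_of_nonneg (indicator_nonneg fun k _ => ha k)
    (hs.indicator _)]
  congr 1 with k
  by_cases hk : y k ∈ t <;> simp [dirac_apply' _ ht, hk]

lemma isProbabilityMeasure_add_smul_dirac (μ : Measure α) (hμ : μ univ ≤ 1) (x : α) :
    IsProbabilityMeasure (μ + (1 - μ univ) • dirac x) :=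
  ⟨by simp [add_tsub_cancel_of_le hμ]⟩

end MeasureTheory.Measure

lemma exists_isProbabilityMeasure_Ioi_eq_inv_add_atoms {A : ℝ → ℝ}
    (hpos : ∀ x, 0 ≤ x → 0 < A x) (hcont : ContinuousOn A (Ici 0))
    (hmono : MonotoneOn A (Ici 0)) (htop : Tendsto A atTop atTop) {x₀ : ℝ} (hx₀ : 0 < x₀)
    {a y : ℕ → ℝ} (ha : ∀ k, 0 ≤ a k) (hs : Summable a) (hmass : (A x₀)⁻¹ + ∑' k, a k ≤ 1)
    (hy : ∀ k, 0 < y k) :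
    ∃ F : Measure ℝ, IsProbabilityMeasure F ∧ F (Iic 0) = 0 ∧
      (∀ k, a k ≤ (F {y k}).toReal) ∧
      ∀ x, x₀ ≤ x → (F (Ioi x)).toReal = (A x)⁻¹ + ∑' k, (y ⁻¹' Ioi x).indicator a k := by
  have hT_top : Tendsto (fun x => (A (max x x₀))⁻¹) atTop (𝓝 0) :=
    (tendsto_inv_atTop_zero.comp htop).congr' <| by
      filter_upwards [eventually_ge_atTop x₀] with x hx using by simp [max_eq_left hx]
  have hT_bot : Tendsto (fun x => (A (max x x₀))⁻¹) atBot (𝓝 (A x₀)⁻¹) :=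
    tendsto_const_nhds.congr' <| by
      filter_upwards [eventually_le_atBot x₀] with x hx using by simp [max_eq_right hx]
  obtain ⟨μ, hμ_univ, hμ_Iic, hμ_Ioi⟩ :=
    (antitone_inv_comp_max hpos hmono hx₀.le).exists_measure_Ioi_eq
      (continuous_inv_comp_max hpos hcont hx₀.le) hT_top hT_bot
  set ν := Measure.sum fun k => ENNReal.ofReal (a k) • Measure.dirac (y k)
  have hν : ∀ t, MeasurableSet t → ν t = ENNReal.ofReal (∑' k, (y ⁻¹' t).indicator a k) :=
    fun _ ht => Measure.sum_smul_dirac_apply ha hs y ht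
  have hmass' : (μ + ν) univ ≤ 1 := by
    rw [Measure.add_apply, hμ_univ, hν _ MeasurableSet.univ, preimage_univ, indicator_univ,
      ← ENNReal.ofReal_add (inv_nonneg.2 (hpos x₀ hx₀.le).le) (tsum_nonneg ha)]
    exact ENNReal.ofReal_le_one.2 hmass
  have hF := Measure.isProbabilityMeasure_add_smul_dirac _ hmass' x₀
  refine ⟨_, hF, ?_, fun k => (ENNReal.ofReal_le_iff_le_toReal (measure_ne_top _ _)).1 ?_,
    fun x hx => ?_⟩
  · have hμ0 : μ (Iic 0) = 0 := by simp [hμ_Iic, max_eq_right hx₀.le]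
    have hy0 : y ⁻¹' Iic 0 = ∅ := eq_empty_of_forall_notMem fun k hk => (hy k).not_ge hk
    simp [Measure.add_apply, hμ0, hν _ measurableSet_Iic, hy0, hx₀]
  · calc ENNReal.ofReal (a k) = (ENNReal.ofReal (a k) • Measure.dirac (y k)) {y k} := by simp
      _ ≤ ν {y k} := Measure.le_sum _ k _
      _ ≤ _ := by rw [Measure.add_apply, Measure.add_apply]; exact le_add_self.trans le_self_add
  · have hμx : μ (Ioi x) = ENNReal.ofReal (A x)⁻¹ := by rw [hμ_Ioi, max_eq_left hx]
    have hA := inv_nonneg.2 (hpos x (hx₀.le.trans hx)).le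
    have hg : 0 ≤ ∑' k, (y ⁻¹' Ioi x).indicator a k :=
      tsum_nonneg (indicator_nonneg fun k _ => ha k)
    rw [← ENNReal.toReal_ofReal (add_nonneg hA hg), ENNReal.ofReal_add hA hg, ← hμx,
      ← hν _ measurableSet_Ioi]
    simp [Measure.add_apply, hx]

theorem atom_construction_general
    (α : ℝ) (hα1 : 0 < α)
    (A : ℝ → ℝ)
    (hApos : ∀ x : ℝ, 0 ≤ x → 0 < A x)
    (hAcont : ContinuousOn A (Set.Ici 0))
    (hAmono : StrictMonoOn A (Set.Ici 0))
    (hAreg : ∀ l : ℝ, 0 < l →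
      Tendsto (fun x : ℝ => A (l * x) / A x) atTop (nhds (l ^ α)))
    (z ε : ℕ → ℝ) (hz : ∀ n, 0 < z n) (hε : ∀ n, 0 < ε n)
    (hε0 : Tendsto ε atTop (nhds 0)) :
    ∃ c : ℝ, 0 < c ∧ ∃ nk : ℕ → ℕ, StrictMono nk ∧
      ∃ F : Measure ℝ, IsProbabilityMeasure F ∧ F (Set.Iic 0) = 0 ∧
        ((fun x : ℝ => (F (Set.Ioi x)).toReal) ~[atTop] fun x : ℝ => 1 / A x) ∧
        ∀ k : ℕ, c * ε (nk k) / A (z (nk k)) ≤ (F {z (nk k)}).toReal := by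
  have hAmono' := hAmono.monotoneOn
  have hAtop := tendsto_atTop_of_tendsto_div_rpow hα1 hApos hAmono' (hAreg 2 two_pos)
  obtain ⟨x₀, hx₀, hAx₀⟩ : ∃ x₀, 0 < x₀ ∧ 2 ≤ A x₀ :=
    ((eventually_gt_atTop 0).and (hAtop.eventually_ge_atTop 2)).exists
  obtain ⟨nk, hnk, hεnk⟩ : ∃ nk : ℕ → ℕ, StrictMono nk ∧ ∀ k, ε (nk k) ≤ (1 / 2) ^ k :=
    extraction_forall_of_eventually fun k => hε0.eventually_le_const (by positivity)
  have hεs : Summable fun k => ε (nk k) :=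
    summable_geometric_two.of_nonneg_of_le (fun k => (hε _).le) hεnk
  have hA0 := hApos 0 le_rfl
  set c := A 0 / 4
  have he0 : ∀ k, 0 ≤ c * ε (nk k) := fun k => by have := hε (nk k); positivity
  have ha : ∀ k, 0 ≤ c * ε (nk k) / A (z (nk k)) := fun k =>
    div_nonneg (he0 k) (hApos _ (hz _).le).le
  obtain ⟨hs, hs_le⟩ := summable_div_and_tsum_div_le hApos hAmono' he0 (hεs.mul_left c)
    fun k => (hz (nk k)).le
  have hmass : (A x₀)⁻¹ + ∑' k, c * ε (nk k) / A (z (nk k)) ≤ 1 := by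
    have hεsum : ∑' k, ε (nk k) ≤ 2 :=
      tsum_geometric_two ▸ hεs.tsum_le_tsum hεnk summable_geometric_two
    have hcsum : (∑' k, c * ε (nk k)) / A 0 ≤ 1 / 2 := by
      rw [tsum_mul_left, div_le_iff₀ hA0]; simp only [c]; nlinarith
    linarith [inv_anti₀ two_pos hAx₀]
  obtain ⟨F, hF, hF0, hatom, htail⟩ := exists_isProbabilityMeasure_Ioi_eq_inv_add_atoms hApos
    hAcont hAmono' hAtop hx₀ ha hs hmass fun k => hz (nk k)
  refine ⟨c, by positivity, nk, hnk, F, hF, hF0, ?_, hatom⟩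
  simp only [one_div]
  refine (isEquivalent_inv_add_tsum_indicator_div hApos hAmono' he0 (hεs.mul_left c)
    fun k => (hz (nk k)).le).congr_left ?_
  filter_upwards [eventually_ge_atTop x₀] with x hx using (htail x hx).symm

/-- **Lemma 7.1**: given `A` regularly varying of index `α ∈ (0,1)` and sequences
`z_n → ∞`, `ε_n → 0`, there are `c > 0`, a subsequence `n_k` and a probability `F`
on `(0,∞)` with tail `∼ 1/A` such that `F({z_{n_k}}) ≥ c·ε_{n_k}/A(z_{n_k})`. -/
theorem atom_construction
    (α : ℝ) (hα1 : 0 < α) (hα2 : α < 1)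
    (A : ℝ → ℝ)
    (hApos : ∀ x : ℝ, 0 ≤ x → 0 < A x)
    (hAcont : ContinuousOn A (Set.Ici 0))
    (hAmono : StrictMonoOn A (Set.Ici 0))
    (hAreg : ∀ l : ℝ, 0 < l →
      Tendsto (fun x : ℝ => A (l * x) / A x) atTop (nhds (l ^ α)))
    (z ε : ℕ → ℝ) (hz : ∀ n, 0 < z n) (hε : ∀ n, 0 < ε n)
    (hztop : Tendsto z atTop atTop) (hε0 : Tendsto ε atTop (nhds 0)) :
    ∃ c : ℝ, 0 < c ∧ ∃ nk : ℕ → ℕ, StrictMono nk ∧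
      ∃ F : Measure ℝ, IsProbabilityMeasure F ∧ F (Set.Iic 0) = 0 ∧
        ((fun x : ℝ => (F (Set.Ioi x)).toReal) ~[atTop] fun x : ℝ => 1 / A x) ∧
        ∀ k : ℕ, c * ε (nk k) / A (z (nk k)) ≤ (F {z (nk k)}).toReal :=
  atom_construction_general α hα1 A hApos hAcont hAmono hAreg z ε hz hε hε0
end

section
/- Suppose F is a Borel probability measure on [0,∞) satisfying tail assumption (T1) with index α ∈ (1/2, 1). Then condition (N) holds automatically: lim_{η→0⁺} limsup_{x→∞} (x/A(x)) · E[ (A(x−X)²/(x−X)) · 1_{1 ≤ x−X < ηx} ] = 0, where X is a random variable with law F. -/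
open MeasureTheory ProbabilityTheory Filter Set Asymptotics Topology

/-!
Write `g t = A t ^ 2 / t`. Regular variation of index `α > 1/2` gives `A (2t)² ≥ q A(t)²` with
`q > 2` for large `t`, so `g` grows geometrically along doublings, while monotonicity of `A` lets
`g` lose at most a factor `2` within one dyadic scale. Hence `g y → ∞` and `g t ≤ M + 2 g y` for
`1 ≤ t ≤ y`. On `{1 ≤ x - X < η x}` the integrand is thus at most `M + 2 g (η x)`, and this event
lies in `{X > x / 2}`, of probability `O(1 / A x)`. So the quantity in (N) is at most
`C M x / A(x)² + 2 C (A (η x) / A x)² / η`, which tends to `2 C η ^ (2α - 1)` as `x → ∞`,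
and this vanishes as `η → 0⁺`.
-/

section Doubling

variable {f : ℝ → ℝ} {q t₀ : ℝ}

theorem exists_two_pow_mul_le_lt {t y : ℝ} (ht : 0 < t) (hty : t ≤ y) :
    ∃ n : ℕ, 2 ^ n * t ≤ y ∧ y < 2 ^ (n + 1) * t := by
  obtain ⟨n, hn₁, hn₂⟩ := exists_nat_pow_near ((one_le_div ht).2 hty) one_lt_two
  exact ⟨n, (le_div_iff₀ ht).1 hn₁, (div_lt_iff₀ ht).1 hn₂⟩

theorem pow_mul_div_le_of_doubling (hf : MonotoneOn f (Ici 0)) (hf₀ : ∀ t, 0 ≤ t → 0 ≤ f t)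
    (ht₀ : 0 < t₀) (hstep : ∀ t, t₀ ≤ t → q * f t ≤ f (2 * t)) (hq : 0 ≤ q) (n : ℕ) {t y : ℝ}
    (ht : t₀ ≤ t) (hy₁ : 2 ^ n * t ≤ y) (hy₂ : y < 2 ^ (n + 1) * t) :
    (q / 2) ^ n * (f t / t) ≤ 2 * (f y / y) := by
  induction n generalizing t with
  | zero =>
    simp only [pow_zero, one_mul, zero_add, pow_one] at hy₁ hy₂ ⊢
    have ht0 : 0 < t := ht₀.trans_le ht
    have hy0 : 0 < y := ht0.trans_le hy₁
    rw [mul_div_assoc', div_le_div_iff₀ ht0 hy0]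
    calc f t * y ≤ f y * y := by gcongr; exact hf ht0.le hy0.le hy₁
      _ ≤ 2 * f y * t := by nlinarith [hf₀ y hy0.le]
  | succ n ih =>
    have ht0 : 0 < t := ht₀.trans_le ht
    have h := ih (t := 2 * t) (by linarith) (by rw [← mul_assoc, ← pow_succ]; exact hy₁)
      (by rw [← mul_assoc, ← pow_succ]; exact hy₂)
    calc (q / 2) ^ (n + 1) * (f t / t) = (q / 2) ^ n * (q * f t / (2 * t)) := by
          field_simp; ring
      _ ≤ (q / 2) ^ n * (f (2 * t) / (2 * t)) := by gcongr; exact hstep t ht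
      _ ≤ 2 * (f y / y) := h

theorem div_le_two_mul_div_of_doubling (hf : MonotoneOn f (Ici 0)) (hf₀ : ∀ t, 0 ≤ t → 0 ≤ f t)
    (ht₀ : 0 < t₀) (hstep : ∀ t, t₀ ≤ t → q * f t ≤ f (2 * t)) (hq : 2 ≤ q) {t y : ℝ}
    (ht : t₀ ≤ t) (hty : t ≤ y) : f t / t ≤ 2 * (f y / y) := by
  have ht0 : 0 < t := ht₀.trans_le ht
  obtain ⟨n, hn₁, hn₂⟩ := exists_two_pow_mul_le_lt ht0 hty
  calc f t / t ≤ (q / 2) ^ n * (f t / t) :=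
        le_mul_of_one_le_left (div_nonneg (hf₀ t ht0.le) ht0.le)
          (one_le_pow₀ ((one_le_div two_pos).2 hq))
    _ ≤ 2 * (f y / y) :=
        pow_mul_div_le_of_doubling hf hf₀ ht₀ hstep (by linarith) n ht hn₁ hn₂

theorem tendsto_div_atTop_of_doubling (hf : MonotoneOn f (Ici 0)) (hf₀ : ∀ t, 0 ≤ t → 0 ≤ f t)
    (ht₀ : 0 < t₀) (hstep : ∀ t, t₀ ≤ t → q * f t ≤ f (2 * t)) (hq : 2 < q) (hft₀ : 0 < f t₀) :
    Tendsto (fun y => f y / y) atTop atTop := by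
  have hq2 : 1 < q / 2 := (one_lt_div two_pos).2 hq
  refine tendsto_atTop.2 fun L => ?_
  obtain ⟨N, hN⟩ := ((tendsto_pow_atTop_atTop_of_one_lt hq2).eventually_ge_atTop
    (2 * L / (f t₀ / t₀))).exists
  filter_upwards [eventually_ge_atTop (2 ^ N * t₀)] with y hy
  obtain ⟨n, hn₁, hn₂⟩ := exists_two_pow_mul_le_lt ht₀
    (le_trans (le_mul_of_one_le_left ht₀.le (one_le_pow₀ one_le_two)) hy)
  have hNn : N ≤ n := by
    have : (2 : ℝ) ^ N < 2 ^ (n + 1) := lt_of_mul_lt_mul_right (hy.trans_lt hn₂) ht₀.le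
    have := (pow_lt_pow_iff_right₀ one_lt_two).1 this
    omega
  have hpos : 0 < f t₀ / t₀ := div_pos hft₀ ht₀
  have hgrowth := pow_mul_div_le_of_doubling hf hf₀ ht₀ hstep (by linarith) n le_rfl hn₁ hn₂
  calc L = 2 * L / (f t₀ / t₀) * (f t₀ / t₀) / 2 := by field_simp
    _ ≤ (q / 2) ^ n * (f t₀ / t₀) / 2 := by
        gcongr
        exact hN.trans (pow_le_pow_right₀ hq2.le hNn)
    _ ≤ f y / y := by linarith

theorem div_le_add_two_mul_div_of_doubling
    (hf : MonotoneOn f (Ici 0)) (hf₀ : ∀ t, 0 ≤ t → 0 ≤ f t) (ht₀ : 0 < t₀)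
    (hstep : ∀ t, t₀ ≤ t → q * f t ≤ f (2 * t)) (hq : 2 ≤ q) {t y : ℝ} (ht : 1 ≤ t)
    (hty : t ≤ y) : f t / t ≤ f t₀ + 2 * (f y / y) := by
  have ht0 : 0 < t := one_pos.trans_le ht
  have hy0 : 0 < y := ht0.trans_le hty
  rcases le_total t₀ t with ht₀t | htt₀
  · have := div_le_two_mul_div_of_doubling hf hf₀ ht₀ hstep hq ht₀t hty
    linarith [hf₀ t₀ ht₀.le]
  · have : f t / t ≤ f t₀ :=
      (div_le_self (hf₀ t ht0.le) ht).trans (hf ht0.le ht₀.le htt₀)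
    linarith [div_nonneg (hf₀ y hy0.le) hy0.le]

end Doubling

theorem exists_sq_doubling {A : ℝ → ℝ} {α : ℝ} (hα : 1 / 2 < α)
    (hApos : ∀ x, 0 ≤ x → 0 < A x)
    (hA : Tendsto (fun x => A (2 * x) / A x) atTop (𝓝 (2 ^ α))) :
    ∃ q, 2 < q ∧ ∃ t₀, 0 < t₀ ∧ ∀ t, t₀ ≤ t → q * A t ^ 2 ≤ A (2 * t) ^ 2 := by
  have h2 : (2 : ℝ) < (2 ^ α) ^ 2 := by
    rw [← Real.rpow_mul_natCast zero_le_two]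
    exact lt_of_eq_of_lt (Real.rpow_one 2).symm
      (Real.rpow_lt_rpow_of_exponent_lt one_lt_two (by push_cast; linarith))
  obtain ⟨q, hq2, hqα⟩ := exists_between h2
  obtain ⟨t₀, ht₀⟩ := eventually_atTop.1
    (((hA.pow 2).eventually (eventually_gt_nhds hqα)).and (eventually_ge_atTop 0))
  refine ⟨q, hq2, max t₀ 1, by positivity, fun t ht => ?_⟩
  obtain ⟨hq, ht0⟩ := ht₀ t (le_of_max_le_left ht)
  rw [div_pow, lt_div_iff₀ (pow_pos (hApos t ht0) 2)] at hq
  exact hq.le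

theorem exists_le_div_of_isEquivalent {A G : ℝ → ℝ} {l c : ℝ} (hl : 0 < l) (hc : c ≠ 0)
    (hApos : ∀ x, 0 ≤ x → 0 < A x)
    (hAl : Tendsto (fun x => A (l * x) / A x) atTop (𝓝 c))
    (hG : G ~[atTop] fun x => 1 / A x) :
    ∃ C, ∀ᶠ x in atTop, G (l * x) ≤ C / A x := by
  have hGl : (fun x => G (l * x)) =O[atTop] fun x => 1 / A (l * x) :=
    hG.isBigO.comp_tendsto (tendsto_id.const_mul_atTop hl)
  have hAl' : (fun x => 1 / A (l * x)) =O[atTop] fun x => 1 / A x := by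
    refine (((hAl.inv₀ hc).isBigO_one ℝ).mul (isBigO_refl (fun x => 1 / A x) _)).congr' ?_
      (by simp)
    filter_upwards [eventually_ge_atTop 0] with x hx
    have := hApos x hx
    have := hApos (l * x) (by positivity)
    field_simp
  obtain ⟨C, hC⟩ := (hGl.trans hAl').bound
  refine ⟨C, ?_⟩
  filter_upwards [hC, eventually_ge_atTop 0] with x hx hx0
  have := hApos x hx0
  rw [Real.norm_of_nonneg (by positivity : 0 ≤ 1 / A x), mul_one_div] at hx
  exact (le_abs_self _).trans hx

theorem integral_indicator_le_mul_measureReal {Ω : Type*} [MeasurableSpace Ω] {μ : Measure Ω}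
    [IsFiniteMeasure μ] {S T : Set Ω} {h : Ω → ℝ} {C : ℝ} (hT : MeasurableSet T) (hST : S ⊆ T)
    (hC : 0 ≤ C) (hh : ∀ s ∈ S, 0 ≤ h s ∧ h s ≤ C) :
    ∫ s, S.indicator h s ∂μ ≤ C * μ.real T := by
  calc ∫ s, S.indicator h s ∂μ ≤ ∫ s, T.indicator (fun _ => C) s ∂μ := by
        refine integral_mono_of_nonneg (.of_forall fun s => ?_)
          ((integrable_const C).indicator hT) (.of_forall fun s => ?_)
        · exact indicator_nonneg (fun s hs => (hh s hs).1) s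
        · by_cases hs : s ∈ S
          · simpa [indicator_of_mem hs, indicator_of_mem (hST hs)] using (hh s hs).2
          · simpa [indicator_of_notMem hs] using indicator_nonneg (fun _ _ => hC) s
    _ = C * μ.real T := by rw [integral_indicator_const C hT, smul_eq_mul, mul_comm]

theorem limsup_mem_Icc_of_le_of_tendsto {ι : Type*} {l : Filter ι} [l.NeBot] {f u : ι → ℝ}
    {L : ℝ} (hf : ∀ᶠ x in l, 0 ≤ f x) (hfu : ∀ᶠ x in l, f x ≤ u x)
    (hu : Tendsto u l (𝓝 L)) : limsup f l ∈ Icc 0 L := by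
  have hbdd : IsBoundedUnder (· ≤ ·) l f := hu.isBoundedUnder_le.mono_le hfu
  have hcobdd : IsCoboundedUnder (· ≤ ·) l f := isCoboundedUnder_le_of_eventually_le l hf
  exact ⟨le_limsup_of_frequently_le hf.frequently hbdd,
    (limsup_le_limsup hfu hcobdd hu.isBoundedUnder_le).trans_eq hu.limsup_eq⟩

theorem tendsto_rpow_sq_div_nhdsGT_zero {α : ℝ} (hα : 1 / 2 < α) :
    Tendsto (fun η : ℝ => (η ^ α) ^ 2 / η) (𝓝[>] 0) (𝓝 0) := by
  have h : Tendsto (fun η : ℝ => η ^ (2 * α - 1)) (𝓝[>] 0) (𝓝 0) := by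
    simpa [Real.zero_rpow (by linarith : 2 * α - 1 ≠ 0)] using
      ((Real.continuousAt_rpow_const 0 (2 * α - 1) (Or.inr (by linarith))).tendsto).mono_left
        nhdsWithin_le_nhds
  refine h.congr' ?_
  filter_upwards [self_mem_nhdsWithin] with η (hη : 0 < η)
  rw [← Real.rpow_mul_natCast hη.le, Real.rpow_sub hη, Real.rpow_one]
  ring_nf

noncomputable def condNTerm (F : Measure ℝ) (A : ℝ → ℝ) (η x : ℝ) : ℝ :=
  x / A x * ∫ y, Set.indicator {s : ℝ | 1 ≤ x - s ∧ x - s < η * x}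
    (fun s => (A (x - s)) ^ 2 / (x - s)) y ∂F

theorem condNTerm_nonneg (F : Measure ℝ) {A : ℝ → ℝ} (hApos : ∀ x, 0 ≤ x → 0 < A x) {η x : ℝ}
    (hx : 0 ≤ x) : 0 ≤ condNTerm F A η x :=
  mul_nonneg (div_nonneg hx (hApos x hx).le) <| integral_nonneg fun y =>
    indicator_nonneg (fun _ hs => div_nonneg (sq_nonneg _) (zero_le_one.trans hs.1)) y

theorem condNTerm_le (F : Measure ℝ) [IsFiniteMeasure F] {A : ℝ → ℝ}
    (hApos : ∀ x, 0 ≤ x → 0 < A x) {M C η : ℝ} (hM₀ : 0 ≤ M)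
    (hM : ∀ t y, 1 ≤ t → t ≤ y → A t ^ 2 / t ≤ M + 2 * (A y ^ 2 / y))
    (hC : ∀ᶠ x in atTop, F.real (Ioi (2⁻¹ * x)) ≤ C / A x) (hη : 0 < η) (hη₂ : η ≤ 2⁻¹) :
    ∀ᶠ x in atTop,
      condNTerm F A η x ≤ C * M * (x / A x ^ 2) + 2 * C * ((A (η * x) / A x) ^ 2 / η) := by
  filter_upwards [hC, eventually_gt_atTop 0] with x hCx hx
  have hAx := hApos x hx.le
  have hAηx := hApos (η * x) (by positivity)
  set K := M + 2 * (A (η * x) ^ 2 / (η * x))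
  have hint : ∫ y, Set.indicator {s : ℝ | 1 ≤ x - s ∧ x - s < η * x}
      (fun s => (A (x - s)) ^ 2 / (x - s)) y ∂F ≤ K * F.real (Ioi (2⁻¹ * x)) := by
    refine integral_indicator_le_mul_measureReal measurableSet_Ioi ?_ (by positivity) ?_
    · rintro s ⟨-, hs⟩
      change 2⁻¹ * x < s
      nlinarith
    · rintro s ⟨hs₁, hs₂⟩
      exact ⟨div_nonneg (sq_nonneg _) (zero_le_one.trans hs₁), hM _ _ hs₁ hs₂.le⟩
  calc condNTerm F A η x ≤ x / A x * (K * (C / A x)) := by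
        unfold condNTerm
        gcongr
        exact hint.trans (by gcongr)
    _ = C * M * (x / A x ^ 2) + 2 * C * ((A (η * x) / A x) ^ 2 / η) := by
        simp only [K]
        field_simp

theorem condN_of_alpha_gt_half_general
    (F : Measure ℝ) [IsProbabilityMeasure F]
    (α : ℝ) (hα1 : 1 / 2 < α)
    (A : ℝ → ℝ)
    (hApos : ∀ x : ℝ, 0 ≤ x → 0 < A x)
    (hAmono : StrictMonoOn A (Set.Ici 0))
    (hAreg : ∀ l : ℝ, 0 < l →
      Tendsto (fun x : ℝ => A (l * x) / A x) atTop (nhds (l ^ α)))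
    (hT1 : (fun x : ℝ => (F (Set.Ioi x)).toReal) ~[atTop] fun x : ℝ => 1 / A x)
    :
    CondN F A := by
  have hf : MonotoneOn (fun t => A t ^ 2) (Ici 0) := fun s hs t ht hst =>
    pow_le_pow_left₀ (hApos s hs).le (hAmono.monotoneOn hs ht hst) 2
  have hf₀ : ∀ t, 0 ≤ t → 0 ≤ A t ^ 2 := fun t _ => sq_nonneg (A t)
  obtain ⟨q, hq, t₀, ht₀, hstep⟩ := exists_sq_doubling hα1 hApos (hAreg 2 two_pos)
  have hdiv : Tendsto (fun x => x / A x ^ 2) atTop (𝓝 0) :=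
    (tendsto_div_atTop_of_doubling hf hf₀ ht₀ hstep hq
      (pow_pos (hApos t₀ ht₀.le) 2)).inv_tendsto_atTop.congr fun x => inv_div _ _
  obtain ⟨C, hC⟩ := exists_le_div_of_isEquivalent (inv_pos.2 two_pos)
    (Real.rpow_pos_of_pos (inv_pos.2 two_pos) α).ne' hApos (hAreg _ (inv_pos.2 two_pos)) hT1
  have hlimsup : ∀ η ∈ Ioc (0 : ℝ) 2⁻¹,
      limsup (condNTerm F A η) atTop ∈ Icc 0 (2 * C * ((η ^ α) ^ 2 / η)) := by
    intro η hη
    have hlim : Tendsto (fun x => C * A t₀ ^ 2 * (x / A x ^ 2) +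
        2 * C * ((A (η * x) / A x) ^ 2 / η)) atTop (𝓝 (2 * C * ((η ^ α) ^ 2 / η))) := by
      simpa using (hdiv.const_mul (C * A t₀ ^ 2)).add
        ((((hAreg η hη.1).pow 2).div_const η).const_mul (2 * C))
    exact limsup_mem_Icc_of_le_of_tendsto
      ((eventually_ge_atTop 0).mono fun x hx => condNTerm_nonneg F hApos hx)
      (condNTerm_le F hApos (hf₀ t₀ ht₀.le)
        (fun _ _ => div_le_add_two_mul_div_of_doubling hf hf₀ ht₀ hstep hq.le) hC hη.1 hη.2)
      hlim
  have hbound : Tendsto (fun η => 2 * C * ((η ^ α) ^ 2 / η)) (𝓝[>] 0) (𝓝 0) := by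
    simpa using (tendsto_rpow_sq_div_nhdsGT_zero hα1).const_mul (2 * C)
  have hη : Ioc (0 : ℝ) 2⁻¹ ∈ 𝓝[>] 0 := Ioc_mem_nhdsGT (by norm_num)
  exact tendsto_of_tendsto_of_tendsto_of_le_of_le' tendsto_const_nhds hbound
    (eventually_of_mem hη fun η hη => (hlimsup η hη).1)
    (eventually_of_mem hη fun η hη => (hlimsup η hη).2)

/-- **Appendix A.4**: under (T1) with `α ∈ (1/2, 1)`, condition (N) holds
automatically. -/
theorem condN_of_alpha_gt_half
    (F : Measure ℝ) [IsProbabilityMeasure F]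
    (hFsupp : F (Set.Iio 0) = 0)
    (α : ℝ) (hα1 : 1 / 2 < α) (hα2 : α < 1)
    (A : ℝ → ℝ)
    (hApos : ∀ x : ℝ, 0 ≤ x → 0 < A x)
    (hAcont : ContinuousOn A (Set.Ici 0))
    (hAmono : StrictMonoOn A (Set.Ici 0))
    (hAreg : ∀ l : ℝ, 0 < l →
      Tendsto (fun x : ℝ => A (l * x) / A x) atTop (nhds (l ^ α)))
    (hT1 : (fun x : ℝ => (F (Set.Ioi x)).toReal) ~[atTop] fun x : ℝ => 1 / A x)
    :
    CondN F A :=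
  condN_of_alpha_gt_half_general F α hα1 A hApos hAmono hAreg hT1
end
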